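/- arXiv:1503.06460 — 3 statements merged into one kernel-verified Lean document; each statement's English description precedes it below -/
import Mathlib

section
/- In ℝⁿ, for any two Borel probability measures μ₀, μ₁ with finite second moments and any displacement interpolation μ_t = ((1−t)·Id + t·T)_# μ₀, where T is an optimal transport map from μ₀ to μ₁ for quadratic cost, the function t ↦ Var(μ_t) is convex on [0,1]. -/
/-!
The variance is `Var(μ_t) = inf_y ∫ ‖(1 - t) x + t T x - y‖² dμ₀(x)`. For each `x` the integrand
is the squared norm of a function affine in `(t, y)`, so the integral is jointly convex in
`(t, y)`, and minimizing a jointly convex function over one of its variables keeps it convex.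
-/

open MeasureTheory Set Filter

/-- The variance of a measure on a metric space: the infimal second moment. -/
noncomputable def var {M : Type*} [MetricSpace M] [MeasurableSpace M] (mu : Measure M) : ℝ :=
  ⨅ y : M, ∫ x, dist x y ^ 2 ∂mu

/-- The squared 2-Wasserstein distance, as the infimal quadratic transport cost over couplings. -/
noncomputable def W2sq {M : Type*} [MetricSpace M] [MeasurableSpace M] (mu nu : Measure M) : ℝ :=
  sInf ((fun gamma : Measure (M × M) => ∫ p, dist p.1 p.2 ^ 2 ∂gamma) ''
    {gamma | gamma.map Prod.fst = mu ∧ gamma.map Prod.snd = nu})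

theorem ConvexOn.ciInf_snd {E F : Type*} [AddCommMonoid E] [Module ℝ E] [AddCommMonoid F]
    [Module ℝ F] [Nonempty F] {s : Set E} {G : E × F → ℝ} (hG : ConvexOn ℝ (s ×ˢ univ) G)
    (hbdd : ∀ x ∈ s, BddBelow (range fun y => G (x, y))) :
    ConvexOn ℝ s fun x => ⨅ y, G (x, y) := by
  have hs : Convex ℝ s := by
    simpa [fst_image_prod _ univ_nonempty] using hG.1.linear_image (LinearMap.fst ℝ E F)
  refine ⟨hs, ?_⟩
  intro x₁ hx₁ x₂ hx₂ a b ha hb hab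
  refine le_of_forall_pos_le_add fun ε hε => ?_
  obtain ⟨y₁, hy₁⟩ := exists_lt_of_ciInf_lt (lt_add_of_pos_right (⨅ y, G (x₁, y)) hε)
  obtain ⟨y₂, hy₂⟩ := exists_lt_of_ciInf_lt (lt_add_of_pos_right (⨅ y, G (x₂, y)) hε)
  have hconv := hG.2 (x := (x₁, y₁)) (y := (x₂, y₂)) ⟨hx₁, mem_univ _⟩ ⟨hx₂, mem_univ _⟩ ha hb hab
  simp only [Prod.smul_mk, Prod.mk_add_mk, smul_eq_mul] at hconv ⊢
  calc ⨅ y, G (a • x₁ + b • x₂, y) ≤ G (a • x₁ + b • x₂, a • y₁ + b • y₂) :=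
        ciInf_le (hbdd _ (hs hx₁ hx₂ ha hb hab)) _
    _ ≤ a * G (x₁, y₁) + b * G (x₂, y₂) := hconv
    _ ≤ a * ((⨅ y, G (x₁, y)) + ε) + b * ((⨅ y, G (x₂, y)) + ε) := by gcongr
    _ = a * (⨅ y, G (x₁, y)) + b * (⨅ y, G (x₂, y)) + ε := by linear_combination ε * hab

theorem ConvexOn.integral {α E : Type*} [MeasurableSpace α] {μ : Measure α} [AddCommMonoid E]
    [Module ℝ E] {s : Set E} {f : α → E → ℝ} (hs : Convex ℝ s) (hf : ∀ x, ConvexOn ℝ s (f x))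
    (hint : ∀ p ∈ s, Integrable (fun x => f x p) μ) :
    ConvexOn ℝ s fun p => ∫ x, f x p ∂μ := by
  refine ⟨hs, fun p hp q hq a b ha hb hab => ?_⟩
  have hp' := (hint p hp).const_mul a
  have hq' := (hint q hq).const_mul b
  calc ∫ x, f x (a • p + b • q) ∂μ ≤ ∫ x, a * f x p + b * f x q ∂μ :=
        integral_mono (hint _ (hs hp hq ha hb hab)) (hp'.add hq') fun x => (hf x).2 hp hq ha hb hab
    _ = a * ∫ x, f x p ∂μ + b * ∫ x, f x q ∂μ := by
        rw [integral_add hp' hq', integral_const_mul, integral_const_mul]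

theorem convexOn_norm_lineMap_sub_sq {E : Type*} [SeminormedAddCommGroup E] [NormedSpace ℝ E]
    (u v : E) : ConvexOn ℝ univ fun p : ℝ × E => ‖(1 - p.1) • u + p.1 • v - p.2‖ ^ 2 := by
  have h := ((convexOn_univ_norm (E := E)).pow (fun _ _ => norm_nonneg _) 2).comp_affineMap
    ((AffineMap.lineMap u v).comp (AffineMap.fst) - AffineMap.snd : ℝ × E →ᵃ[ℝ] E)
  simpa [Function.comp_def, AffineMap.lineMap_apply_module] using h

theorem var_map {α M : Type*} [MeasurableSpace α] {μ : Measure α} [MetricSpace M]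
    [MeasurableSpace M] [OpensMeasurableSpace M] {g : α → M} (hg : AEMeasurable g μ) :
    var (μ.map g) = ⨅ y, ∫ x, dist (g x) y ^ 2 ∂μ := by
  unfold var
  congr! 2 with y
  exact integral_map hg (by fun_prop : Continuous fun z => dist z y ^ 2).aestronglyMeasurable

theorem variance_displacement_convex_euclidean_general (n : ℕ)
    (μ₀ μ₁ : Measure (EuclideanSpace ℝ (Fin n)))
    [IsProbabilityMeasure μ₀]
    (h0 : Integrable (fun x => ‖x‖ ^ 2) μ₀) (h1 : Integrable (fun x => ‖x‖ ^ 2) μ₁)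
    (T : EuclideanSpace ℝ (Fin n) → EuclideanSpace ℝ (Fin n))
    (hTmeas : Measurable T) (hTpush : μ₀.map T = μ₁) :
    ConvexOn ℝ (Set.Icc (0 : ℝ) 1)
      (fun t => var (μ₀.map (fun x => (1 - t) • x + t • T x))) := by
  have hid : MemLp id 2 μ₀ := (memLp_two_iff_integrable_sq_norm aestronglyMeasurable_id).2 h0
  have hT : MemLp T 2 μ₀ := by
    have hid₁ : MemLp id 2 (μ₀.map T) :=
      (memLp_two_iff_integrable_sq_norm aestronglyMeasurable_id).2 (hTpush ▸ h1)
    exact (memLp_map_measure_iff aestronglyMeasurable_id hTmeas.aemeasurable).1 hid₁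
  have hcost : ConvexOn ℝ univ fun p : ℝ × EuclideanSpace ℝ (Fin n) =>
      ∫ x, ‖(1 - p.1) • x + p.1 • T x - p.2‖ ^ 2 ∂μ₀ :=
    .integral convex_univ (fun x => convexOn_norm_lineMap_sub_sq x (T x)) fun p _ =>
      (((hid.const_smul (1 - p.1)).add (hT.const_smul p.1)).sub
        (memLp_const p.2)).integrable_norm_pow two_ne_zero
  have hvar := (hcost.subset (subset_univ _) ((convex_Icc 0 1).prod convex_univ)).ciInf_snd
    fun t _ => ⟨0, by rintro _ ⟨y, rfl⟩; positivity⟩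
  refine hvar.congr fun t _ => ?_
  rw [var_map (by fun_prop)]
  simp_rw [dist_eq_norm]

/-- Displacement convexity of the variance in ℝⁿ: along the displacement interpolation
`μ_t = ((1-t)Id + tT)_# μ₀` given by an optimal transport map `T` for the quadratic cost,
the variance is convex in `t` on `[0,1]`. -/
theorem variance_displacement_convex_euclidean (n : ℕ)
    (μ₀ μ₁ : Measure (EuclideanSpace ℝ (Fin n)))
    [IsProbabilityMeasure μ₀] [IsProbabilityMeasure μ₁]
    (h0 : Integrable (fun x => ‖x‖ ^ 2) μ₀) (h1 : Integrable (fun x => ‖x‖ ^ 2) μ₁)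
    (T : EuclideanSpace ℝ (Fin n) → EuclideanSpace ℝ (Fin n))
    (hTmeas : Measurable T) (hTpush : μ₀.map T = μ₁)
    (hTopt : ∀ γ : Measure (EuclideanSpace ℝ (Fin n) × EuclideanSpace ℝ (Fin n)),
      γ.map Prod.fst = μ₀ → γ.map Prod.snd = μ₁ →
      (∫ x, ‖x - T x‖ ^ 2 ∂μ₀) ≤ ∫ p, ‖p.1 - p.2‖ ^ 2 ∂γ) :
    ConvexOn ℝ (Set.Icc (0 : ℝ) 1)
      (fun t => var (μ₀.map (fun x => (1 - t) • x + t • T x))) :=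
  variance_displacement_convex_euclidean_general n μ₀ μ₁ h0 h1 T hTmeas hTpush
end

section
/- Stability of Wasserstein barycenters: let M be a compact metric space and suppose probability measures Ω_N on (P(M), W₂) converge weakly-* to Ω. If μ̄_N is a W₂-barycenter of Ω_N and μ̄_N → μ̄ weakly-*, then μ̄ is a W₂-barycenter of Ω. -/
/-!
On a compact space `M`, `W₂` is bounded by `diam M`, symmetric, and satisfies the triangle
inequality: glue two couplings along their common marginal. Weak convergence `μₙ → μ` forces
`W₂(μₙ, μ) → 0`: cut `M` into finitely many small cells whose boundaries are `μ`-null, so that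
`μₙ` and `μ` give almost the same mass to each cell, move the common mass inside the cells and
the small remainder arbitrarily. Consequently `μ ↦ W₂²(μ, ν)` is a bounded continuous function
on `P(M)`, depending on `ν` continuously in the sup norm, and both sides of the barycenter
inequality for `(Ω_N, μ̄_N)` converge to the corresponding sides for `(Ω, μ̄)`.
-/

open MeasureTheory Set Filter

open ProbabilityTheory Metric Topology
open scoped ENNReal

section Coupling

variable {α β : Type*} [MeasurableSpace α] [MeasurableSpace β]

def IsCoupling (γ : Measure (α × β)) (μ : Measure α) (ν : Measure β) : Prop :=
  γ.map Prod.fst = μ ∧ γ.map Prod.snd = ν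

namespace IsCoupling

variable {γ γ' : Measure (α × β)} {μ μ' : Measure α} {ν ν' : Measure β}

lemma measure_univ (h : IsCoupling γ μ ν) : γ univ = μ univ := by
  rw [← h.1, Measure.map_apply measurable_fst .univ, preimage_univ]

lemma measure_univ_eq (h : IsCoupling γ μ ν) : μ univ = ν univ := by
  rw [← h.1, ← h.2, Measure.map_apply measurable_fst .univ, Measure.map_apply measurable_snd .univ,
    preimage_univ, preimage_univ]

lemma isFiniteMeasure [IsFiniteMeasure μ] (h : IsCoupling γ μ ν) : IsFiniteMeasure γ :=
  ⟨h.measure_univ ▸ measure_lt_top μ univ⟩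

lemma swap (h : IsCoupling γ μ ν) : IsCoupling (γ.map Prod.swap) ν μ :=
  ⟨by rw [Measure.map_map measurable_fst measurable_swap]; exact h.2,
    by rw [Measure.map_map measurable_snd measurable_swap]; exact h.1⟩

lemma add (h : IsCoupling γ μ ν) (h' : IsCoupling γ' μ' ν') :
    IsCoupling (γ + γ') (μ + μ') (ν + ν') :=
  ⟨by rw [Measure.map_add _ _ measurable_fst, h.1, h'.1],
    by rw [Measure.map_add _ _ measurable_snd, h.2, h'.2]⟩

lemma finset_sum {ι : Type*} {s : Finset ι} {γs : ι → Measure (α × β)} {μs : ι → Measure α}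
    {νs : ι → Measure β} (h : ∀ i ∈ s, IsCoupling (γs i) (μs i) (νs i)) :
    IsCoupling (∑ i ∈ s, γs i) (∑ i ∈ s, μs i) (∑ i ∈ s, νs i) := by
  refine ⟨?_, ?_⟩
  · rw [Measure.map_finset_sum measurable_fst.aemeasurable]
    exact Finset.sum_congr rfl fun i hi => (h i hi).1
  · rw [Measure.map_finset_sum measurable_snd.aemeasurable]
    exact Finset.sum_congr rfl fun i hi => (h i hi).2

lemma ae_mem_prod {s : Set α} {t : Set β} (h : IsCoupling γ μ ν) (hs : ∀ᵐ x ∂μ, x ∈ s)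
    (ht : ∀ᵐ y ∂ν, y ∈ t) : ∀ᵐ p ∂γ, p ∈ s ×ˢ t := by
  rw [← h.1] at hs
  rw [← h.2] at ht
  filter_upwards [ae_of_ae_map measurable_fst.aemeasurable hs,
    ae_of_ae_map measurable_snd.aemeasurable ht] with p hp1 hp2 using ⟨hp1, hp2⟩

end IsCoupling

lemma isCoupling_smul_prod (μ : Measure α) (ν : Measure β) [IsFiniteMeasure μ]
    [IsFiniteMeasure ν] (h : μ univ = ν univ) :
    IsCoupling ((μ univ)⁻¹ • μ.prod ν) μ ν := by
  rcases eq_or_ne (μ univ) 0 with h0 | h0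
  · have hμ : μ = 0 := Measure.measure_univ_eq_zero.mp h0
    have hν : ν = 0 := Measure.measure_univ_eq_zero.mp (h ▸ h0)
    subst hμ hν
    simp [IsCoupling]
  · have hinv : (μ univ)⁻¹ * μ univ = 1 := ENNReal.inv_mul_cancel h0 (measure_ne_top μ univ)
    refine ⟨?_, ?_⟩
    · rw [Measure.map_smul, Measure.map_fst_prod, smul_smul, ← h, hinv, one_smul]
    · rw [Measure.map_smul, Measure.map_snd_prod, smul_smul, hinv, one_smul]

lemma isCoupling_prod (μ : Measure α) (ν : Measure β) [IsProbabilityMeasure μ]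
    [IsProbabilityMeasure ν] : IsCoupling (μ.prod ν) μ ν := by
  simpa using isCoupling_smul_prod μ ν (by simp)

end Coupling

lemma dist_le_diam_univ {M : Type*} [PseudoMetricSpace M] [BoundedSpace M] (x y : M) :
    dist x y ≤ diam (univ : Set M) :=
  dist_le_diam_of_mem (Bornology.isBounded_univ.2 ‹_›) (mem_univ x) (mem_univ y)

section TransportCost

variable {M : Type*} [MetricSpace M] [MeasurableSpace M]

noncomputable def transportCost (γ : Measure (M × M)) : ℝ := ∫ p, dist p.1 p.2 ^ 2 ∂γ

lemma W2sq_eq_sInf (μ ν : Measure M) :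
    W2sq μ ν = sInf (transportCost '' {γ | IsCoupling γ μ ν}) := rfl

lemma transportCost_nonneg (γ : Measure (M × M)) : 0 ≤ transportCost γ :=
  integral_nonneg fun _ => sq_nonneg _

lemma transportCost_le_of_ae_dist_le {γ : Measure (M × M)} [IsFiniteMeasure γ] {δ : ℝ}
    (h : ∀ᵐ p ∂γ, dist p.1 p.2 ≤ δ) : transportCost γ ≤ δ ^ 2 * γ.real univ := by
  calc transportCost γ ≤ ∫ _, δ ^ 2 ∂γ :=
        integral_mono_of_nonneg (ae_of_all _ fun _ => sq_nonneg _) (integrable_const _)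
          (h.mono fun p hp => pow_le_pow_left₀ dist_nonneg hp 2)
    _ = δ ^ 2 * γ.real univ := by rw [integral_const, smul_eq_mul, mul_comm]

lemma W2sq_nonneg (μ ν : Measure M) : 0 ≤ W2sq μ ν :=
  Real.sInf_nonneg <| by rintro _ ⟨γ, -, rfl⟩; exact transportCost_nonneg γ

lemma bddBelow_transportCost_image (S : Set (Measure (M × M))) : BddBelow (transportCost '' S) :=
  ⟨0, by rintro _ ⟨γ, -, rfl⟩; exact transportCost_nonneg γ⟩

lemma W2sq_le_transportCost {γ : Measure (M × M)} {μ ν : Measure M} (h : IsCoupling γ μ ν) :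
    W2sq μ ν ≤ transportCost γ :=
  csInf_le (bddBelow_transportCost_image _) ⟨γ, h, rfl⟩

lemma exists_seq_isCoupling_tendsto_W2sq (μ ν : Measure M) [IsProbabilityMeasure μ]
    [IsProbabilityMeasure ν] : ∃ γs : ℕ → Measure (M × M), (∀ n, IsCoupling (γs n) μ ν) ∧
      Tendsto (fun n => transportCost (γs n)) atTop (𝓝 (W2sq μ ν)) := by
  obtain ⟨u, -, hu, hmem⟩ := exists_seq_tendsto_sInf (⟨_, _, isCoupling_prod μ ν, rfl⟩ :
    (transportCost '' {γ | IsCoupling γ μ ν}).Nonempty) (bddBelow_transportCost_image _)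
  choose γs hγs hcost using hmem
  exact ⟨γs, hγs, by simpa only [hcost, W2sq_eq_sInf] using hu⟩

section Bounded

variable [BoundedSpace M]

lemma transportCost_le_diam_sq_mul (γ : Measure (M × M)) [IsFiniteMeasure γ] :
    transportCost γ ≤ diam (univ : Set M) ^ 2 * γ.real univ :=
  transportCost_le_of_ae_dist_le (ae_of_all _ fun p => dist_le_diam_univ p.1 p.2)

lemma W2sq_le_diam_sq (μ ν : Measure M) [IsProbabilityMeasure μ] [IsProbabilityMeasure ν] :
    W2sq μ ν ≤ diam (univ : Set M) ^ 2 := by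
  have hγ := isCoupling_prod μ ν
  calc W2sq μ ν ≤ transportCost (μ.prod ν) := W2sq_le_transportCost hγ
    _ ≤ diam (univ : Set M) ^ 2 * (μ.prod ν).real univ := transportCost_le_diam_sq_mul _
    _ = diam (univ : Set M) ^ 2 := by rw [probReal_univ, mul_one]

end Bounded

variable [BorelSpace M] [SecondCountableTopology M]

lemma transportCost_map_swap (γ : Measure (M × M)) :
    transportCost (γ.map Prod.swap) = transportCost γ := by
  simp only [transportCost]
  rw [integral_map measurable_swap.aemeasurable (by fun_prop : Continuous fun p : M × M =>
    dist p.1 p.2 ^ 2).aestronglyMeasurable]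
  simp [dist_comm]

lemma W2sq_comm (μ ν : Measure M) : W2sq μ ν = W2sq ν μ := by
  have key : ∀ μ ν : Measure M, transportCost '' {γ | IsCoupling γ μ ν} ⊆
      transportCost '' {γ | IsCoupling γ ν μ} := by
    rintro μ ν _ ⟨γ, hγ, rfl⟩
    exact ⟨γ.map Prod.swap, hγ.swap, transportCost_map_swap γ⟩
  rw [W2sq_eq_sInf, W2sq_eq_sInf, (key μ ν).antisymm (key ν μ)]

variable [BoundedSpace M]

lemma integrable_dist_sq (γ : Measure (M × M)) [IsFiniteMeasure γ] :
    Integrable (fun p : M × M => dist p.1 p.2 ^ 2) γ :=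
  Integrable.of_bound
    (by fun_prop : Continuous fun p : M × M => dist p.1 p.2 ^ 2).aestronglyMeasurable
    (diam (univ : Set M) ^ 2) (ae_of_all _ fun p => by
      rw [Real.norm_of_nonneg (sq_nonneg _)]
      exact pow_le_pow_left₀ dist_nonneg (dist_le_diam_univ _ _) 2)

lemma transportCost_add (γ γ' : Measure (M × M)) [IsFiniteMeasure γ] [IsFiniteMeasure γ'] :
    transportCost (γ + γ') = transportCost γ + transportCost γ' :=
  integral_add_measure (integrable_dist_sq γ) (integrable_dist_sq γ')

end TransportCost

section Remainder

variable {M : Type*} [MetricSpace M] [MeasurableSpace M] [BorelSpace M] [SecondCountableTopology M]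
  [BoundedSpace M]

/-- What `γ` leaves over of `P` and `Q` is coupled independently, at cost `≤ diam² · mass`. -/
lemma W2sq_le_transportCost_add_of_le {P Q X Y : Measure M} [IsProbabilityMeasure P]
    [IsProbabilityMeasure Q] (hX : X ≤ P) (hY : Y ≤ Q) {γ : Measure (M × M)}
    (hγ : IsCoupling γ X Y) :
    W2sq P Q ≤ transportCost γ + diam (univ : Set M) ^ 2 * (1 - X.real univ) := by
  have : IsFiniteMeasure X := isFiniteMeasure_of_le P hX
  have : IsFiniteMeasure Y := isFiniteMeasure_of_le Q hY
  have : IsFiniteMeasure (P - X) := isFiniteMeasure_of_le P Measure.sub_le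
  have : IsFiniteMeasure (Q - Y) := isFiniteMeasure_of_le Q Measure.sub_le
  have : IsFiniteMeasure γ := hγ.isFiniteMeasure
  have hrest : (P - X) univ = (Q - Y) univ := by
    rw [Measure.sub_apply .univ hX, Measure.sub_apply .univ hY, measure_univ (μ := P),
      measure_univ (μ := Q), hγ.measure_univ_eq]
  set γ' := ((P - X) univ)⁻¹ • (P - X).prod (Q - Y)
  have hγ' : IsCoupling γ' (P - X) (Q - Y) := isCoupling_smul_prod _ _ hrest
  have : IsFiniteMeasure γ' := hγ'.isFiniteMeasure
  have hPQ : IsCoupling (γ + γ') P Q := by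
    simpa only [add_comm X, add_comm Y, Measure.sub_add_cancel_of_le hX,
      Measure.sub_add_cancel_of_le hY] using hγ.add hγ'
  have hγ'mass : γ'.real univ = 1 - X.real univ := by
    rw [measureReal_def, hγ'.measure_univ, Measure.sub_apply .univ hX, measure_univ (μ := P),
      ENNReal.toReal_sub_of_le (measure_univ (μ := P) ▸ hX univ) ENNReal.one_ne_top,
      ENNReal.toReal_one, measureReal_def]
  calc W2sq P Q ≤ transportCost (γ + γ') := W2sq_le_transportCost hPQ
    _ = transportCost γ + transportCost γ' := transportCost_add γ γ'
    _ ≤ transportCost γ + diam (univ : Set M) ^ 2 * (1 - X.real univ) := by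
      rw [← hγ'mass]; exact add_le_add_right (transportCost_le_diam_sq_mul γ') _

end Remainder

lemma add_sq_le_young {a b ε : ℝ} (hε : 0 < ε) :
    (a + b) ^ 2 ≤ (1 + ε) * a ^ 2 + (1 + ε⁻¹) * b ^ 2 := by
  have key : 0 ≤ (ε * a - b) ^ 2 / ε := div_nonneg (sq_nonneg _) hε.le
  have expand : (1 + ε) * a ^ 2 + (1 + ε⁻¹) * b ^ 2 - (a + b) ^ 2 = (ε * a - b) ^ 2 / ε := by
    field_simp
    ring
  linarith

lemma le_add_sq_of_forall_young {x a b : ℝ} (ha : 0 ≤ a) (hb : 0 ≤ b)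
    (h : ∀ ε > 0, x ≤ (1 + ε) * a ^ 2 + (1 + ε⁻¹) * b ^ 2) : x ≤ (a + b) ^ 2 := by
  have hlim : Tendsto (fun t => (a + b) ^ 2 + t * (a + b)) (𝓝[>] 0) (𝓝 ((a + b) ^ 2)) := by
    have : Continuous fun t : ℝ => (a + b) ^ 2 + t * (a + b) := by fun_prop
    simpa using (this.tendsto 0).mono_left nhdsWithin_le_nhds
  refine ge_of_tendsto hlim (eventually_nhdsWithin_of_forall fun t (ht : 0 < t) => ?_)
  -- the choice `ε = (b + t) / (a + t)` nearly balances the two terms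
  have h₁ : (b + t) / (a + t) * a ^ 2 ≤ (b + t) * a := by
    rw [div_mul_eq_mul_div, div_le_iff₀ (by positivity)]
    nlinarith [mul_nonneg (mul_nonneg ha ht.le) (add_nonneg hb ht.le)]
  have h₂ : ((b + t) / (a + t))⁻¹ * b ^ 2 ≤ (a + t) * b := by
    rw [inv_div, div_mul_eq_mul_div, div_le_iff₀ (by positivity)]
    nlinarith [mul_nonneg (mul_nonneg hb ht.le) (add_nonneg ha ht.le)]
  have := h ((b + t) / (a + t)) (by positivity)
  nlinarith

lemma exists_glue {α β γ : Type*} [MeasurableSpace α] [MeasurableSpace β] [MeasurableSpace γ]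
    [StandardBorelSpace α] [Nonempty α] [StandardBorelSpace γ] [Nonempty γ]
    (ρ₁ : Measure (β × α)) (ρ₂ : Measure (β × γ)) [IsFiniteMeasure ρ₁] [IsFiniteMeasure ρ₂]
    (h : ρ₁.fst = ρ₂.fst) :
    ∃ θ : Measure (β × α × γ),
      θ.map (Prod.map id Prod.fst) = ρ₁ ∧ θ.map (Prod.map id Prod.snd) = ρ₂ := by
  refine ⟨ρ₁.fst ⊗ₘ (ρ₁.condKernel ×ₖ ρ₂.condKernel), ?_, ?_⟩
  · rw [← Measure.compProd_map measurable_fst, ← Kernel.fst_eq, Kernel.fst_prod, ρ₁.disintegrate]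
  · rw [← Measure.compProd_map measurable_snd, ← Kernel.snd_eq, Kernel.snd_prod, h,
      ρ₂.disintegrate]

section Triangle

variable {M : Type*} [MetricSpace M] [MeasurableSpace M] [BorelSpace M] [SecondCountableTopology M]
  [BoundedSpace M]

lemma transportCost_map_snd_le (θ : Measure (M × M × M)) [IsFiniteMeasure θ] {ε : ℝ}
    (hε : 0 < ε) :
    transportCost (θ.map Prod.snd) ≤ (1 + ε) * transportCost (θ.map (Prod.map id Prod.fst)) +
      (1 + ε⁻¹) * transportCost (θ.map (Prod.map id Prod.snd)) := by
  have hcont : Continuous fun p : M × M => dist p.1 p.2 ^ 2 := by fun_prop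
  have hint : ∀ {f : M × M × M → M × M}, Measurable f →
      Integrable (fun p => dist (f p).1 (f p).2 ^ 2) θ :=
    fun hf => (integrable_dist_sq _).comp_measurable hf
  have hint₁ := (hint (f := Prod.map id Prod.fst) (by fun_prop)).const_mul (1 + ε)
  have hint₂ := (hint (f := Prod.map id Prod.snd) (by fun_prop)).const_mul (1 + ε⁻¹)
  simp only [transportCost]
  rw [integral_map (by fun_prop) hcont.aestronglyMeasurable,
    integral_map (by fun_prop) hcont.aestronglyMeasurable,
    integral_map (by fun_prop) hcont.aestronglyMeasurable, ← integral_const_mul,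
    ← integral_const_mul, ← integral_add hint₁ hint₂]
  refine integral_mono (hint measurable_snd) (hint₁.add hint₂) fun p => ?_
  calc dist p.2.1 p.2.2 ^ 2 ≤ (dist p.1 p.2.1 + dist p.1 p.2.2) ^ 2 :=
        pow_le_pow_left₀ dist_nonneg (dist_triangle_left _ _ _) 2
    _ ≤ _ := add_sq_le_young hε

variable [CompleteSpace M]

lemma W2sq_le_young_of_isCoupling {μ β α : Measure M} [IsProbabilityMeasure β]
    {γ₁ γ₂ : Measure (M × M)} (h₁ : IsCoupling γ₁ μ β) (h₂ : IsCoupling γ₂ β α) {ε : ℝ}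
    (hε : 0 < ε) :
    W2sq μ α ≤ (1 + ε) * transportCost γ₁ + (1 + ε⁻¹) * transportCost γ₂ := by
  have : Nonempty M := nonempty_of_isProbabilityMeasure β
  have : IsFiniteMeasure (γ₁.map Prod.swap) := h₁.swap.isFiniteMeasure
  have : IsFiniteMeasure γ₂ := h₂.isFiniteMeasure
  obtain ⟨θ, hθ₁, hθ₂⟩ := exists_glue (γ₁.map Prod.swap) γ₂ (h₁.swap.1.trans h₂.1.symm)
  have : IsFiniteMeasure (θ.map (Prod.map id Prod.snd)) := hθ₂ ▸ ‹_›
  have : IsFiniteMeasure θ :=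
    Measure.isFiniteMeasure_of_map (f := Prod.map id Prod.snd) (by fun_prop)
  have hθ : IsCoupling (θ.map Prod.snd) μ α := by
    constructor
    · rw [← h₁.swap.2, ← hθ₁, Measure.map_map measurable_fst measurable_snd,
        Measure.map_map measurable_snd (by fun_prop)]
      rfl
    · rw [← h₂.2, ← hθ₂, Measure.map_map measurable_snd measurable_snd,
        Measure.map_map measurable_snd (by fun_prop)]
      rfl
  calc W2sq μ α ≤ transportCost (θ.map Prod.snd) := W2sq_le_transportCost hθ
    _ ≤ _ := transportCost_map_snd_le θ hε
    _ = _ := by rw [hθ₁, hθ₂, transportCost_map_swap]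

lemma W2sq_le_young (μ β α : Measure M) [IsProbabilityMeasure μ] [IsProbabilityMeasure β]
    [IsProbabilityMeasure α] {ε : ℝ} (hε : 0 < ε) :
    W2sq μ α ≤ (1 + ε) * W2sq μ β + (1 + ε⁻¹) * W2sq β α := by
  obtain ⟨γ₁, h₁, hlim₁⟩ := exists_seq_isCoupling_tendsto_W2sq μ β
  obtain ⟨γ₂, h₂, hlim₂⟩ := exists_seq_isCoupling_tendsto_W2sq β α
  exact ge_of_tendsto' ((hlim₁.const_mul _).add (hlim₂.const_mul _))
    fun n => W2sq_le_young_of_isCoupling (h₁ n) (h₂ n) hε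

end Triangle

section W2

variable {M : Type*} [MetricSpace M] [MeasurableSpace M]

noncomputable def W2 (μ ν : Measure M) : ℝ := √(W2sq μ ν)

lemma W2_nonneg (μ ν : Measure M) : 0 ≤ W2 μ ν := Real.sqrt_nonneg _

lemma W2_sq (μ ν : Measure M) : W2 μ ν ^ 2 = W2sq μ ν := Real.sq_sqrt (W2sq_nonneg μ ν)

lemma W2_le_diam [BoundedSpace M] (μ ν : Measure M) [IsProbabilityMeasure μ]
    [IsProbabilityMeasure ν] : W2 μ ν ≤ diam (univ : Set M) :=
  (Real.sqrt_le_left diam_nonneg).2 (W2sq_le_diam_sq μ ν)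

variable [BorelSpace M] [SecondCountableTopology M]

lemma W2_comm (μ ν : Measure M) : W2 μ ν = W2 ν μ := by rw [W2, W2, W2sq_comm]

variable [CompleteSpace M] [BoundedSpace M]

lemma W2_triangle (μ β α : Measure M) [IsProbabilityMeasure μ] [IsProbabilityMeasure β]
    [IsProbabilityMeasure α] : W2 μ α ≤ W2 μ β + W2 β α :=
  (Real.sqrt_le_left (add_nonneg (W2_nonneg μ β) (W2_nonneg β α))).2 <|
    le_add_sq_of_forall_young (W2_nonneg μ β) (W2_nonneg β α) fun _ hε => by
      simpa only [W2_sq] using W2sq_le_young μ β α hε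

lemma abs_W2sq_sub_W2sq_le (μ ν ν' : Measure M) [IsProbabilityMeasure μ] [IsProbabilityMeasure ν]
    [IsProbabilityMeasure ν'] :
    |W2sq μ ν - W2sq μ ν'| ≤ 2 * diam (univ : Set M) * W2 ν ν' := by
  have h₁ := W2_triangle μ ν' ν
  have h₂ := W2_triangle μ ν ν'
  rw [W2_comm ν' ν] at h₁
  have := W2_le_diam μ ν
  have := W2_le_diam μ ν'
  have := W2_nonneg μ ν
  have := W2_nonneg μ ν'
  rw [← W2_sq, ← W2_sq, abs_le]
  constructor <;> nlinarith

end W2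

section Partition

lemma exists_partition_null_frontier {M : Type*} [MetricSpace M] [CompactSpace M]
    [MeasurableSpace M] [OpensMeasurableSpace M] (μ : Measure M) [SFinite μ] {δ : ℝ}
    (hδ : 0 < δ) :
    ∃ (k : ℕ) (A : Fin k → Set M), (∀ i, MeasurableSet (A i)) ∧
      Pairwise (Function.onFun Disjoint A) ∧ ⋃ i, A i = univ ∧ (∀ i, μ (frontier (A i)) = 0) ∧
      ∀ i, ∀ x ∈ A i, ∀ y ∈ A i, dist x y ≤ δ := by
  have : ∀ x : M, ∃ r ∈ Ioo 0 (δ / 2), μ (frontier (ball x r)) = 0 := fun x => by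
    simpa [thickening_singleton] using exists_null_frontier_thickening μ {x} (half_pos hδ)
  choose r hr hnull using this
  obtain ⟨t, ht⟩ := isCompact_univ.elim_finite_subcover (fun x => ball x (r x))
    (fun _ => isOpen_ball) fun x _ => mem_iUnion.2 ⟨x, mem_ball_self (hr x).1⟩
  set B : Fin t.card → Set M := fun i => ball (t.equivFin.symm i) (r (t.equivFin.symm i))
  refine ⟨t.card, disjointed B, fun i => ?_, disjoint_disjointed B, ?_, fun i => ?_,
    fun i x hx y hy => ?_⟩
  · exact disjointedRec (fun _ _ hs => hs.diff measurableSet_ball) measurableSet_ball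
  · refine iUnion_disjointed.trans (eq_univ_of_forall fun x => ?_)
    obtain ⟨c, hc, hxc⟩ := mem_iUnion₂.1 (ht (mem_univ x))
    exact mem_iUnion.2 ⟨t.equivFin ⟨c, hc⟩, by simpa [B] using hxc⟩
  · refine disjointedRec (p := fun s => μ (frontier s) = 0) (fun s j hs => ?_) (hnull _)
    refine measure_mono_null (frontier_inter_subset s (B j)ᶜ) (measure_union_null ?_ ?_)
    · exact measure_mono_null inter_subset_left hs
    · exact measure_mono_null inter_subset_right (by rw [frontier_compl]; exact hnull _)
  · have hx' := disjointed_subset B i hx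
    have hy' := disjointed_subset B i hy
    simp only [B, mem_ball] at hx' hy'
    linarith [dist_triangle_right x y (t.equivFin.symm i : M), (hr (t.equivFin.symm i)).2]

section Cond

variable {α : Type*} [MeasurableSpace α] {μ : Measure α} {s : Set α} {c : ℝ≥0∞}

lemma ae_smul_cond_mem (hs : MeasurableSet s) : ∀ᵐ x ∂(c • μ[|s]), x ∈ s :=
  Measure.smul_absolutelyContinuous.ae_le (ae_cond_mem hs)

variable [IsFiniteMeasure μ]

lemma smul_cond_apply_univ (hc : c ≤ μ s) : (c • μ[|s]) univ = c := by
  rcases eq_or_ne (μ s) 0 with hs | hs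
  · simp [nonpos_iff_eq_zero.1 (hs ▸ hc)]
  · have := cond_isProbabilityMeasure hs
    simp

lemma smul_cond_le_restrict (hc : c ≤ μ s) : c • μ[|s] ≤ μ.restrict s := by
  rcases eq_or_ne (μ s) 0 with hs | hs
  · simp [nonpos_iff_eq_zero.1 (hs ▸ hc), Measure.zero_le]
  · calc c • μ[|s] ≤ μ s • μ[|s] := IsOrderedSMul.smul_le_smul_right _ _ hc _
      _ = μ.restrict s := by
        rw [ProbabilityTheory.cond, smul_smul, ENNReal.mul_inv_cancel hs (measure_ne_top μ s),
          one_smul]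

end Cond

section Cells

variable {α ι : Type*} [MeasurableSpace α] [Fintype ι] {A : ι → Set α} {c : ι → ℝ≥0∞}

lemma sum_smul_cond_le (P : Measure α) [IsFiniteMeasure P] (hmeas : ∀ i, MeasurableSet (A i))
    (hdisj : Pairwise (Function.onFun Disjoint A)) (hcover : ⋃ i, A i = univ)
    (hc : ∀ i, c i ≤ P (A i)) : ∑ i, c i • P[|A i] ≤ P := by
  calc ∑ i, c i • P[|A i] ≤ ∑ i, P.restrict (A i) :=
        Finset.sum_le_sum fun i _ => smul_cond_le_restrict (hc i)
    _ = P := by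
      rw [← Measure.sum_fintype, ← Measure.restrict_iUnion hdisj hmeas, hcover,
        Measure.restrict_univ]

lemma sum_smul_cond_apply_univ (P : Measure α) [IsFiniteMeasure P] (hc : ∀ i, c i ≤ P (A i)) :
    (∑ i, c i • P[|A i]) univ = ∑ i, c i := by
  simp only [Measure.coe_finsetSum, Finset.sum_apply]
  exact Finset.sum_congr rfl fun i _ => smul_cond_apply_univ (hc i)

lemma exists_isCoupling_sum_smul_cond (P Q : Measure α) [IsFiniteMeasure P] [IsFiniteMeasure Q]
    (hmeas : ∀ i, MeasurableSet (A i)) (hP : ∀ i, c i ≤ P (A i)) (hQ : ∀ i, c i ≤ Q (A i)) :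
    ∃ γ : Measure (α × α), IsCoupling γ (∑ i, c i • P[|A i]) (∑ i, c i • Q[|A i]) ∧
      ∀ᵐ p ∂γ, ∃ i, p ∈ A i ×ˢ A i := by
  have : ∀ i, IsFiniteMeasure (c i • P[|A i]) := fun i =>
    isFiniteMeasure_of_le _ (smul_cond_le_restrict (hP i))
  have : ∀ i, IsFiniteMeasure (c i • Q[|A i]) := fun i =>
    isFiniteMeasure_of_le _ (smul_cond_le_restrict (hQ i))
  have hcell : ∀ i ∈ Finset.univ, IsCoupling (((c i • P[|A i]) univ)⁻¹ •
      (c i • P[|A i]).prod (c i • Q[|A i])) (c i • P[|A i]) (c i • Q[|A i]) := fun i _ =>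
    isCoupling_smul_prod _ _ <| by rw [smul_cond_apply_univ (hP i), smul_cond_apply_univ (hQ i)]
  refine ⟨_, IsCoupling.finset_sum hcell, ?_⟩
  rw [← Measure.sum_fintype, Measure.ae_sum_iff]
  intro i
  filter_upwards [(hcell i (Finset.mem_univ i)).ae_mem_prod (ae_smul_cond_mem (hmeas i))
    (ae_smul_cond_mem (hmeas i))] with p hp using ⟨i, hp⟩

end Cells

variable {M : Type*} [MetricSpace M] [MeasurableSpace M] [BorelSpace M]
  [SecondCountableTopology M] [BoundedSpace M]

/-- Transport the common mass `min (P (A i)) (Q (A i))` of each cell within the cell, and the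
rest arbitrarily. -/
lemma W2sq_le_of_partition {ι : Type*} [Fintype ι] (P Q : Measure M) [IsProbabilityMeasure P]
    [IsProbabilityMeasure Q] {A : ι → Set M} (hmeas : ∀ i, MeasurableSet (A i))
    (hdisj : Pairwise (Function.onFun Disjoint A)) (hcover : ⋃ i, A i = univ) {δ : ℝ}
    (hdiam : ∀ i, ∀ x ∈ A i, ∀ y ∈ A i, dist x y ≤ δ) :
    W2sq P Q ≤ δ ^ 2 + diam (univ : Set M) ^ 2 *
      (1 - (∑ i, min (P (A i)) (Q (A i))).toReal) := by
  set c : ι → ℝ≥0∞ := fun i => min (P (A i)) (Q (A i))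
  have hcP : ∀ i, c i ≤ P (A i) := fun i => min_le_left _ _
  have hcQ : ∀ i, c i ≤ Q (A i) := fun i => min_le_right _ _
  obtain ⟨γ, hγ, hcells⟩ := exists_isCoupling_sum_smul_cond P Q hmeas hcP hcQ
  have hXP := sum_smul_cond_le P hmeas hdisj hcover hcP
  have : IsFiniteMeasure (∑ i, c i • P[|A i]) := isFiniteMeasure_of_le P hXP
  have : IsFiniteMeasure γ := hγ.isFiniteMeasure
  have hmass : (∑ i, c i • P[|A i]).real univ = (∑ i, c i).toReal := by
    rw [measureReal_def, sum_smul_cond_apply_univ P hcP]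
  have hγmass : γ.real univ = (∑ i, c i).toReal := by
    rw [measureReal_def, hγ.measure_univ, sum_smul_cond_apply_univ P hcP]
  have hmass_le : (∑ i, c i).toReal ≤ 1 := by
    have := ENNReal.toReal_mono (measure_ne_top P univ) (hXP univ)
    rwa [measure_univ (μ := P), ENNReal.toReal_one, sum_smul_cond_apply_univ P hcP] at this
  have hnear : ∀ᵐ p ∂γ, dist p.1 p.2 ≤ δ := hcells.mono fun p ⟨i, hp⟩ => hdiam i _ hp.1 _ hp.2
  calc W2sq P Q ≤ transportCost γ + diam (univ : Set M) ^ 2 * (1 - (∑ i, c i).toReal) := by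
        simpa only [hmass] using
          W2sq_le_transportCost_add_of_le hXP (sum_smul_cond_le Q hmeas hdisj hcover hcQ) hγ
    _ ≤ δ ^ 2 * (∑ i, c i).toReal + diam (univ : Set M) ^ 2 * (1 - (∑ i, c i).toReal) := by
        gcongr
        exact hγmass ▸ transportCost_le_of_ae_dist_le hnear
    _ ≤ δ ^ 2 + diam (univ : Set M) ^ 2 * (1 - (∑ i, c i).toReal) := by
        gcongr
        nlinarith [sq_nonneg δ]

end Partition

section Convergence

variable {M : Type*} [MetricSpace M] [CompactSpace M] [MeasurableSpace M] [BorelSpace M]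

lemma tendsto_W2sq_of_tendsto {ι : Type*} {L : Filter ι} {μs : ι → ProbabilityMeasure M}
    {μ : ProbabilityMeasure M} (h : Tendsto μs L (𝓝 μ)) :
    Tendsto (fun i => W2sq (μs i : Measure M) μ) L (𝓝 0) := by
  refine tendsto_order.2 ⟨fun a ha => .of_forall fun i => ha.trans_le (W2sq_nonneg _ _),
    fun b hb => ?_⟩
  obtain ⟨δ, hδ, hδb⟩ : ∃ δ > 0, δ ^ 2 < b :=
    ⟨√b / 2, by positivity, by nlinarith [Real.sq_sqrt hb.le, Real.sqrt_pos.2 hb]⟩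
  obtain ⟨k, A, hmeas, hdisj, hcover, hnull, hdiam⟩ :=
    exists_partition_null_frontier (μ : Measure M) hδ
  have hsum : ∑ j, (μ : Measure M) (A j) = 1 := by
    have := measure_iUnion (μ := (μ : Measure M)) hdisj hmeas
    rwa [hcover, measure_univ, tsum_fintype, eq_comm] at this
  set m : ι → ℝ := fun i => (∑ j, min ((μs i : Measure M) (A j)) ((μ : Measure M) (A j))).toReal
  have hm : Tendsto m L (𝓝 1) := by
    have := tendsto_finsetSum Finset.univ fun j _ =>
      (ProbabilityMeasure.tendsto_measure_of_null_frontier_of_tendsto' h (hnull j)).min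
        (tendsto_const_nhds (x := (μ : Measure M) (A j)))
    simp only [min_self, hsum] at this
    simpa [Function.comp_def] using (ENNReal.tendsto_toReal ENNReal.one_ne_top).comp this
  have hbound : Tendsto (fun i => δ ^ 2 + diam (univ : Set M) ^ 2 * (1 - m i)) L (𝓝 (δ ^ 2)) := by
    simpa using ((hm.const_sub 1).const_mul (diam (univ : Set M) ^ 2)).const_add (δ ^ 2)
  filter_upwards [hbound.eventually (gt_mem_nhds hδb)] with i hi
  exact (W2sq_le_of_partition _ _ hmeas hdisj hcover hdiam).trans_lt hi

lemma tendsto_W2_of_tendsto {ι : Type*} {L : Filter ι} {μs : ι → ProbabilityMeasure M}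
    {μ : ProbabilityMeasure M} (h : Tendsto μs L (𝓝 μ)) :
    Tendsto (fun i => W2 (μs i : Measure M) μ) L (𝓝 0) := by
  simpa [W2, Function.comp_def] using
    (Real.continuous_sqrt.tendsto 0).comp (tendsto_W2sq_of_tendsto h)

end Convergence

section Barycenter

open BoundedContinuousFunction

lemma tendsto_integral_of_tendsto_of_tendsto {X ι : Type*} [TopologicalSpace X]
    [MeasurableSpace X] [OpensMeasurableSpace X] {L : Filter ι} {μs : ι → ProbabilityMeasure X}
    {μ : ProbabilityMeasure X} (hμ : Tendsto μs L (𝓝 μ)) {fs : ι → X →ᵇ ℝ} {f : X →ᵇ ℝ}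
    (hf : Tendsto fs L (𝓝 f)) :
    Tendsto (fun i => ∫ x, fs i x ∂(μs i : Measure X)) L (𝓝 (∫ x, f x ∂(μ : Measure X))) := by
  have hdiff : Tendsto (fun i => ∫ x, (fs i - f) x ∂(μs i : Measure X)) L (𝓝 0) :=
    squeeze_zero_norm (fun i => norm_integral_le_norm _ _)
      (tendsto_iff_norm_sub_tendsto_zero.1 hf)
  refine (zero_add (∫ x, f x ∂(μ : Measure X)) ▸
    hdiff.add (ProbabilityMeasure.tendsto_iff_forall_integral_tendsto.1 hμ f)).congr fun i => ?_
  rw [← integral_add ((fs i - f).integrable _) (f.integrable _)]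
  simp

variable {M : Type*} [MetricSpace M] [CompactSpace M] [MeasurableSpace M] [BorelSpace M]

lemma continuous_W2sq_left (ν : Measure M) [IsProbabilityMeasure ν] :
    Continuous fun μ : ProbabilityMeasure M => W2sq (μ : Measure M) ν := by
  refine continuous_iff_continuousAt.2 fun μ => tendsto_iff_dist_tendsto_zero.2 ?_
  have hW2 :=
    (tendsto_W2_of_tendsto (tendsto_id (x := 𝓝 μ))).const_mul (2 * diam (univ : Set M))
  rw [mul_zero] at hW2
  refine squeeze_zero (fun _ => dist_nonneg) (fun μ' => ?_) hW2
  change |W2sq (μ' : Measure M) ν - W2sq (μ : Measure M) ν| ≤ _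
  rw [W2sq_comm _ ν, W2sq_comm _ ν]
  exact abs_W2sq_sub_W2sq_le ν μ' μ

noncomputable def W2sqBCF (ν : ProbabilityMeasure M) : ProbabilityMeasure M →ᵇ ℝ :=
  mkOfCompact ⟨fun μ => W2sq (μ : Measure M) ν, continuous_W2sq_left (ν : Measure M)⟩

lemma tendsto_W2sqBCF {ι : Type*} {L : Filter ι} {νs : ι → ProbabilityMeasure M}
    {ν : ProbabilityMeasure M} (h : Tendsto νs L (𝓝 ν)) :
    Tendsto (fun i => W2sqBCF (νs i)) L (𝓝 (W2sqBCF ν)) := by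
  have hW2 := (tendsto_W2_of_tendsto h).const_mul (2 * diam (univ : Set M))
  rw [mul_zero] at hW2
  refine tendsto_iff_dist_tendsto_zero.2 (squeeze_zero (fun _ => dist_nonneg) (fun i => ?_) hW2)
  refine (dist_le (mul_nonneg (mul_nonneg zero_le_two diam_nonneg) (W2_nonneg _ _))).2 fun μ => ?_
  exact abs_W2sq_sub_W2sq_le (μ : Measure M) _ _

lemma tendsto_integral_W2sq [MeasurableSpace (ProbabilityMeasure M)]
    [BorelSpace (ProbabilityMeasure M)] {ι : Type*} {L : Filter ι}
    {Ωs : ι → ProbabilityMeasure (ProbabilityMeasure M)}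
    {Ω : ProbabilityMeasure (ProbabilityMeasure M)} (hΩ : Tendsto Ωs L (𝓝 Ω))
    {νs : ι → ProbabilityMeasure M} {ν : ProbabilityMeasure M} (hν : Tendsto νs L (𝓝 ν)) :
    Tendsto (fun i => ∫ μ, W2sq (μ : Measure M) (νs i : Measure M)
        ∂(Ωs i : Measure (ProbabilityMeasure M))) L
      (𝓝 (∫ μ, W2sq (μ : Measure M) (ν : Measure M) ∂(Ω : Measure (ProbabilityMeasure M)))) :=
  tendsto_integral_of_tendsto_of_tendsto hΩ (tendsto_W2sqBCF hν)

end Barycenter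

theorem wasserstein_barycenter_stability_general {M : Type*} [MetricSpace M] [CompactSpace M]
    [MeasurableSpace M] [BorelSpace M]
    [MeasurableSpace (ProbabilityMeasure M)] [BorelSpace (ProbabilityMeasure M)]
    (Ωs : ℕ → ProbabilityMeasure (ProbabilityMeasure M))
    (Ω : ProbabilityMeasure (ProbabilityMeasure M))
    (hconv : Tendsto Ωs atTop (nhds Ω))
    (μbs : ℕ → ProbabilityMeasure M)
    (hbc : ∀ N, ∀ ν : ProbabilityMeasure M,
      ∫ μ, W2sq (μ : Measure M) (μbs N : Measure M) ∂(Ωs N : Measure (ProbabilityMeasure M)) ≤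
      ∫ μ, W2sq (μ : Measure M) (ν : Measure M) ∂(Ωs N : Measure (ProbabilityMeasure M)))
    (μb : ProbabilityMeasure M) (hlim : Tendsto μbs atTop (nhds μb)) :
    ∀ ν : ProbabilityMeasure M,
      ∫ μ, W2sq (μ : Measure M) (μb : Measure M) ∂(Ω : Measure (ProbabilityMeasure M)) ≤
      ∫ μ, W2sq (μ : Measure M) (ν : Measure M) ∂(Ω : Measure (ProbabilityMeasure M)) := fun ν =>
  le_of_tendsto_of_tendsto' (tendsto_integral_W2sq hconv hlim)
    (tendsto_integral_W2sq hconv tendsto_const_nhds) fun N => hbc N ν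

/-- Stability of Wasserstein barycenters: if `Ω_N → Ω` weakly-* on `P(M)` (`M` compact),
`μ̄_N` is a `W₂`-barycenter of `Ω_N` and `μ̄_N → μ̄` weakly-*, then `μ̄` is a
`W₂`-barycenter of `Ω`. -/
theorem wasserstein_barycenter_stability {M : Type*} [MetricSpace M] [CompactSpace M] [Nonempty M]
    [MeasurableSpace M] [BorelSpace M]
    [MeasurableSpace (ProbabilityMeasure M)] [BorelSpace (ProbabilityMeasure M)]
    (Ωs : ℕ → ProbabilityMeasure (ProbabilityMeasure M))
    (Ω : ProbabilityMeasure (ProbabilityMeasure M))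
    (hconv : Tendsto Ωs atTop (nhds Ω))
    (μbs : ℕ → ProbabilityMeasure M)
    (hbc : ∀ N, ∀ ν : ProbabilityMeasure M,
      ∫ μ, W2sq (μ : Measure M) (μbs N : Measure M) ∂(Ωs N : Measure (ProbabilityMeasure M)) ≤
      ∫ μ, W2sq (μ : Measure M) (ν : Measure M) ∂(Ωs N : Measure (ProbabilityMeasure M)))
    (μb : ProbabilityMeasure M) (hlim : Tendsto μbs atTop (nhds μb)) :
    ∀ ν : ProbabilityMeasure M,
      ∫ μ, W2sq (μ : Measure M) (μb : Measure M) ∂(Ω : Measure (ProbabilityMeasure M)) ≤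
      ∫ μ, W2sq (μ : Measure M) (ν : Measure M) ∂(Ω : Measure (ProbabilityMeasure M)) :=
  wasserstein_barycenter_stability_general Ωs Ω hconv μbs hbc μb hlim
end

section
/- Convexity of variance along W₂ quasi-geodesics in CAT(0) spaces: let μ be a probability measure on a CAT(0) space M and μ_t = (x ↦ γ_x(t))_# μ where γ_x are measurable families of geodesics. Then t ↦ Var(μ_t) is convex on [0,1]. -/
/-!
In an NPC space the distance between a midpoint of `a, b` and a midpoint of `c, d` is at most
`(d(a,c) + d(b,d)) / 2`. Applied pointwise to the geodesics `γ x` and to a midpoint of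
two centres `y₁`, `y₂`, this bounds the second moment of `μ_{(s+t)/2}` about that midpoint by
the average of the second moments of `μ_s` about `y₁` and of `μ_t` about `y₂`, so
`t ↦ Var(μ_t)` is midpoint convex. Moving along the geodesics changes second moments at a rate
controlled by the second moments of the endpoints, so the variance is Lipschitz on `[0,1]`, and
a continuous midpoint-convex function is convex.
-/

open MeasureTheory Set Filter

/-- A constant-speed geodesic parametrized on `[0,1]`. -/
def IsGeodesic {M : Type*} [MetricSpace M] (z : ℝ → M) : Prop :=
  ∀ s ∈ Set.Icc (0:ℝ) 1, ∀ t ∈ Set.Icc (0:ℝ) 1,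
    dist (z s) (z t) = |s - t| * dist (z 0) (z 1)

/-- Nonpositive curvature in the sense of (midpoint) comparison: `M` is an NPC (CAT(0))
space; together with completeness this characterizes Hadamard spaces. -/
def IsNPC (M : Type*) [MetricSpace M] : Prop :=
  ∀ x y : M, ∃ m : M, ∀ z : M,
    dist z m ^ 2 ≤ dist z x ^ 2 / 2 + dist z y ^ 2 / 2 - dist x y ^ 2 / 4

theorem ContinuousOn.nonpos_of_midpoint_le {g : ℝ → ℝ} (hc : ContinuousOn g (Icc 0 1))
    (hmid : ∀ a ∈ Icc (0:ℝ) 1, ∀ b ∈ Icc (0:ℝ) 1, g (midpoint ℝ a b) ≤ (g a + g b) / 2)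
    (hg₀ : g 0 ≤ 0) (hg₁ : g 1 ≤ 0) {t : ℝ} (ht : t ∈ Icc (0:ℝ) 1) : g t ≤ 0 := by
  have dyadic_mem {n k : ℕ} (hk : k ≤ 2 ^ n) : (k / 2 ^ n : ℝ) ∈ Icc 0 1 :=
    ⟨by positivity, div_le_one_of_le₀ (by exact_mod_cast hk) (by positivity)⟩
  have dyadic : ∀ n k : ℕ, k ≤ 2 ^ n → g (k / 2 ^ n) ≤ 0 := by
    intro n
    induction n with
    | zero =>
      intro k hk
      interval_cases k <;> simpa
    | succ n ih =>
      intro k hk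
      obtain ⟨j, rfl | rfl⟩ := Nat.even_or_odd' k
      · convert ih j (by omega) using 2
        push_cast; ring
      · have hj : j ≤ 2 ^ n := by omega
        have hj' : j + 1 ≤ 2 ^ n := by omega
        have hsplit : ((2 * j + 1 : ℕ) / 2 ^ (n + 1) : ℝ)
            = midpoint ℝ (j / 2 ^ n : ℝ) ((j + 1 : ℕ) / 2 ^ n : ℝ) := by
          rw [midpoint_eq_smul_add, invOf_eq_inv, smul_eq_mul]; push_cast; ring
        rw [hsplit]
        linarith [hmid _ (dyadic_mem hj) _ (dyadic_mem hj'), ih j hj, ih (j + 1) hj']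
  have hclosed : IsClosed (Icc (0:ℝ) 1 ∩ g ⁻¹' Iic 0) :=
    hc.preimage_isClosed_of_isClosed isClosed_Icc isClosed_Iic
  have hlim : Tendsto (fun n : ℕ => (⌊t * 2 ^ n⌋₊ / 2 ^ n : ℝ)) atTop (nhds t) :=
    (tendsto_nat_floor_mul_div_atTop ht.1).comp
      (tendsto_pow_atTop_atTop_of_one_lt one_lt_two)
  refine (hclosed.mem_of_tendsto hlim (Eventually.of_forall fun n => ?_)).2
  have hk : ⌊t * 2 ^ n⌋₊ ≤ 2 ^ n := Nat.floor_le_of_le (by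
    push_cast; nlinarith [ht.2, pow_pos (two_pos (α := ℝ)) n])
  exact ⟨dyadic_mem hk, dyadic n _ hk⟩

theorem ContinuousOn.convexOn_of_midpoint_le {E : Type*} [AddCommGroup E] [Module ℝ E]
    [TopologicalSpace E] [IsTopologicalAddGroup E] [ContinuousSMul ℝ E] {s : Set E} {f : E → ℝ}
    (hs : Convex ℝ s) (hf : ContinuousOn f s)
    (hmid : ∀ x ∈ s, ∀ y ∈ s, f (midpoint ℝ x y) ≤ (f x + f y) / 2) : ConvexOn ℝ s f := by
  refine ⟨hs, fun x hx y hy a b ha hb hab => ?_⟩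
  obtain rfl : a = 1 - b := by linarith
  let ℓ := AffineMap.lineMap (k := ℝ) x y
  have hℓ : MapsTo ℓ (Icc 0 1) s := fun t ht => hs.lineMap_mem hx hy ht
  have key := ContinuousOn.nonpos_of_midpoint_le
    (g := fun t => f (ℓ t) - ((1 - t) * f x + t * f y))
    ((hf.comp (AffineMap.lineMap_continuous.continuousOn) hℓ).sub (by fun_prop))
    (fun u hu v hv => by
      have := hmid _ (hℓ hu) _ (hℓ hv)
      rw [AffineMap.map_midpoint, midpoint_eq_smul_add ℝ u, invOf_eq_inv, smul_eq_mul]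
      linarith)
    (by simp [ℓ]) (by simp [ℓ]) ⟨hb, by linarith⟩
  simp only [ℓ, AffineMap.lineMap_apply_module, smul_eq_mul] at key ⊢
  linarith

section NPC

variable {M : Type*} [MetricSpace M]

def IsMetricMidpoint (a b m : M) : Prop :=
  dist m a = dist a b / 2 ∧ dist m b = dist a b / 2

theorem IsMetricMidpoint.symm {a b m : M} (h : IsMetricMidpoint a b m) :
    IsMetricMidpoint b a m := by
  rw [IsMetricMidpoint, dist_comm b a]; exact ⟨h.2, h.1⟩

theorem dist_sq_le_two_mul_add (a b w : M) :
    dist a b ^ 2 ≤ 2 * dist a w ^ 2 + 2 * dist b w ^ 2 := by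
  nlinarith [dist_triangle_right a b w, dist_nonneg (x := a) (y := b),
    sq_nonneg (dist a w - dist b w)]

theorem IsNPC.sq_dist_le_of_isMetricMidpoint (hM : IsNPC M) {a b m : M}
    (hm : IsMetricMidpoint a b m) (z : M) :
    dist z m ^ 2 ≤ dist z a ^ 2 / 2 + dist z b ^ 2 / 2 - dist a b ^ 2 / 4 := by
  obtain ⟨m', hm'⟩ := hM a b
  -- the comparison inequality at `z := m` forces the given midpoint to be `m'`
  have h := hm' m
  rw [hm.1, hm.2] at h
  obtain rfl : m = m' := dist_le_zero.mp (by nlinarith [dist_nonneg (x := m) (y := m')])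
  exact hm' z

theorem IsNPC.exists_isMetricMidpoint (hM : IsNPC M) (a b : M) :
    ∃ m, IsMetricMidpoint a b m := by
  obtain ⟨m, hm⟩ := hM a b
  have ha := hm a
  have hb := hm b
  rw [dist_self, dist_comm a m] at ha
  rw [dist_self, dist_comm b a, dist_comm b m] at hb
  have hma : dist m a ≤ dist a b / 2 := abs_le_of_sq_le_sq' (by nlinarith) (by positivity) |>.2
  have hmb : dist m b ≤ dist a b / 2 := abs_le_of_sq_le_sq' (by nlinarith) (by positivity) |>.2
  have := dist_triangle_left a b m
  exact ⟨m, by linarith, by linarith⟩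

theorem IsNPC.dist_midpoints_le_of_common_left (hM : IsNPC M)
    {a b c p q : M} (hp : IsMetricMidpoint a b p) (hq : IsMetricMidpoint a c q) :
    dist p q ≤ dist b c / 2 := by
  have h₁ := hM.sq_dist_le_of_isMetricMidpoint hq p
  have h₂ := hM.sq_dist_le_of_isMetricMidpoint hp c
  rw [hp.1] at h₁
  rw [dist_comm c a, dist_comm c b, dist_comm c p] at h₂
  exact abs_le_of_sq_le_sq' (by nlinarith) (by positivity) |>.2

theorem IsNPC.dist_midpoints_le (hM : IsNPC M) {a b c d p q : M}
    (hp : IsMetricMidpoint a b p) (hq : IsMetricMidpoint c d q) :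
    dist p q ≤ (dist a c + dist b d) / 2 := by
  obtain ⟨r, hr⟩ := hM.exists_isMetricMidpoint a d
  have h₁ := hM.dist_midpoints_le_of_common_left hp hr
  have h₂ := hM.dist_midpoints_le_of_common_left hr.symm hq.symm
  linarith [dist_triangle p r q]

end NPC

section Geodesic

variable {M : Type*} [MetricSpace M] {z : ℝ → M} {s t : ℝ}

theorem IsGeodesic.isMetricMidpoint (hz : IsGeodesic z) (hs : s ∈ Icc (0:ℝ) 1)
    (ht : t ∈ Icc (0:ℝ) 1) : IsMetricMidpoint (z s) (z t) (z (midpoint ℝ s t)) := by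
  have hmid := (convex_Icc (0:ℝ) 1).midpoint_mem (𝕜 := ℝ) hs ht
  have hs' : |midpoint ℝ s t - s| = |s - t| / 2 := by
    have h := dist_midpoint_left (𝕜 := ℝ) s t
    rw [Real.dist_eq, Real.dist_eq, Real.norm_two] at h
    rw [h]; ring
  have ht' : |midpoint ℝ s t - t| = |s - t| / 2 := by
    have h := dist_midpoint_right (𝕜 := ℝ) s t
    rw [Real.dist_eq, Real.dist_eq, Real.norm_two] at h
    rw [h]; ring
  rw [IsMetricMidpoint, hz _ hmid _ hs, hz _ hmid _ ht, hz _ hs _ ht, hs', ht']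
  constructor <;> ring

theorem IsGeodesic.dist_le_add (hz : IsGeodesic z) (ht : t ∈ Icc (0:ℝ) 1)
    (hs : s ∈ Icc (0:ℝ) 1) (y : M) :
    dist (z t) y ≤ dist (z s) y + |t - s| * dist (z 0) (z 1) := by
  rw [← hz t ht s hs]
  linarith [dist_triangle (z t) (z s) y]

theorem IsGeodesic.sq_dist_le_add (hz : IsGeodesic z) (ht : t ∈ Icc (0:ℝ) 1)
    (hs : s ∈ Icc (0:ℝ) 1) (y : M) :
    dist (z t) y ^ 2 ≤
      (1 + |t - s|) * dist (z s) y ^ 2 + 2 * |t - s| * dist (z 0) (z 1) ^ 2 := by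
  have hδ : |t - s| ≤ 1 := abs_sub_le_iff.2 ⟨by linarith [ht.2, hs.1], by linarith [ht.1, hs.2]⟩
  have h := pow_le_pow_left₀ dist_nonneg (hz.dist_le_add ht hs y) 2
  nlinarith [abs_nonneg (t - s), sq_nonneg (dist (z s) y - dist (z 0) (z 1)),
    mul_nonneg (abs_nonneg (t - s)) (sq_nonneg (dist (z s) y - dist (z 0) (z 1))),
    mul_nonneg (sub_nonneg.2 hδ) (mul_nonneg (abs_nonneg (t - s)) (sq_nonneg (dist (z 0) (z 1))))]

theorem IsGeodesic.sq_dist_le (hz : IsGeodesic z) (ht : t ∈ Icc (0:ℝ) 1) (y : M) :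
    dist (z t) y ^ 2 ≤ 6 * dist (z 0) y ^ 2 + 3 * dist (z 1) y ^ 2 := by
  have h := hz.dist_le_add ht (left_mem_Icc.2 zero_le_one) y
  rw [sub_zero, abs_of_nonneg ht.1] at h
  have hL := dist_triangle_right (z 0) (z 1) y
  have h' : dist (z t) y ≤ 2 * dist (z 0) y + dist (z 1) y := by
    nlinarith [ht.2, dist_nonneg (x := z 0) (y := z 1)]
  nlinarith [pow_le_pow_left₀ dist_nonneg h' 2, sq_nonneg (dist (z 0) y - dist (z 1) y)]

theorem IsNPC.sq_dist_geodesic_midpoint_le (hM : IsNPC M) (hz : IsGeodesic z)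
    (hs : s ∈ Icc (0:ℝ) 1) (ht : t ∈ Icc (0:ℝ) 1) {y₁ y₂ m : M}
    (hm : IsMetricMidpoint y₁ y₂ m) :
    dist (z (midpoint ℝ s t)) m ^ 2 ≤ dist (z s) y₁ ^ 2 / 2 + dist (z t) y₂ ^ 2 / 2 := by
  have h := hM.dist_midpoints_le (hz.isMetricMidpoint hs ht) hm
  nlinarith [pow_le_pow_left₀ dist_nonneg h 2, sq_nonneg (dist (z s) y₁ - dist (z t) y₂)]

end Geodesic

section Variance

variable {M : Type*} [MetricSpace M] [MeasurableSpace M] [OpensMeasurableSpace M]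
  {Ω : Type*} [MeasurableSpace Ω] {μ : Measure Ω}

theorem integral_sq_dist_map {f : Ω → M} (hf : Measurable f) (y : M) :
    ∫ x, dist x y ^ 2 ∂μ.map f = ∫ ω, dist (f ω) y ^ 2 ∂μ :=
  integral_map hf.aemeasurable ((continuous_id.dist continuous_const).pow 2).aestronglyMeasurable

theorem var_map_le {f : Ω → M} (hf : Measurable f) (y : M) :
    var (μ.map f) ≤ ∫ ω, dist (f ω) y ^ 2 ∂μ := by
  refine (ciInf_le ⟨0, ?_⟩ y).trans_eq (integral_sq_dist_map hf y)
  rintro _ ⟨y, rfl⟩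
  exact integral_nonneg fun _ => sq_nonneg _

theorem le_var_map [Nonempty M] {f : Ω → M} (hf : Measurable f) {c : ℝ}
    (h : ∀ y, c ≤ ∫ ω, dist (f ω) y ^ 2 ∂μ) : c ≤ var (μ.map f) :=
  le_ciInf fun y => (h y).trans_eq (integral_sq_dist_map hf y).symm

theorem MeasureTheory.Integrable.sq_dist_of_sq_dist [IsFiniteMeasure μ] {f : Ω → M}
    (hf : Measurable f) {y₀ : M} (h : Integrable (fun ω => dist (f ω) y₀ ^ 2) μ) (y : M) :
    Integrable (fun ω => dist (f ω) y ^ 2) μ := by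
  refine ((h.const_mul 2).add (integrable_const (2 * dist y y₀ ^ 2))).mono'
    (by fun_prop : Measurable fun ω => dist (f ω) y ^ 2).aestronglyMeasurable
    (ae_of_all _ fun ω => ?_)
  rw [Real.norm_of_nonneg (sq_nonneg _)]
  exact dist_sq_le_two_mul_add _ _ _

variable {γ : Ω → ℝ → M}

theorem integrable_sq_dist_geodesic [IsFiniteMeasure μ] (hgeo : ∀ᵐ ω ∂μ, IsGeodesic (γ ω))
    (hmeas : ∀ t ∈ Icc (0:ℝ) 1, Measurable (γ · t)) {y₀ : M}
    (h₀ : Integrable (fun ω => dist (γ ω 0) y₀ ^ 2) μ)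
    (h₁ : Integrable (fun ω => dist (γ ω 1) y₀ ^ 2) μ) {t : ℝ} (ht : t ∈ Icc (0:ℝ) 1) (y : M) :
    Integrable (fun ω => dist (γ ω t) y ^ 2) μ := by
  have h₀' := h₀.sq_dist_of_sq_dist (hmeas 0 (left_mem_Icc.2 zero_le_one)) y
  have h₁' := h₁.sq_dist_of_sq_dist (hmeas 1 (right_mem_Icc.2 zero_le_one)) y
  have hγ := hmeas t ht
  refine ((h₀'.const_mul 6).add (h₁'.const_mul 3)).mono'
    (by fun_prop : Measurable fun ω => dist (γ ω t) y ^ 2).aestronglyMeasurable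
    (hgeo.mono fun ω hω => ?_)
  rw [Real.norm_of_nonneg (sq_nonneg _)]
  exact hω.sq_dist_le ht y

theorem var_map_midpoint_le [Nonempty M] (hM : IsNPC M)
    (hgeo : ∀ᵐ ω ∂μ, IsGeodesic (γ ω)) (hmeas : ∀ t ∈ Icc (0:ℝ) 1, Measurable (γ · t))
    (hint : ∀ t ∈ Icc (0:ℝ) 1, ∀ y, Integrable (fun ω => dist (γ ω t) y ^ 2) μ)
    {s t : ℝ} (hs : s ∈ Icc (0:ℝ) 1) (ht : t ∈ Icc (0:ℝ) 1) :
    var (μ.map (γ · (midpoint ℝ s t))) ≤ (var (μ.map (γ · s)) + var (μ.map (γ · t))) / 2 := by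
  have hmid := (convex_Icc (0:ℝ) 1).midpoint_mem (𝕜 := ℝ) hs ht
  suffices h : ∀ y₁ y₂, var (μ.map (γ · (midpoint ℝ s t))) ≤
      (∫ ω, dist (γ ω s) y₁ ^ 2 ∂μ) / 2 + (∫ ω, dist (γ ω t) y₂ ^ 2 ∂μ) / 2 by
    have hs' : ∀ y₂, 2 * var (μ.map (γ · (midpoint ℝ s t))) - ∫ ω, dist (γ ω t) y₂ ^ 2 ∂μ ≤
        var (μ.map (γ · s)) :=
      fun y₂ => le_var_map (hmeas s hs) fun y₁ => by linarith [h y₁ y₂]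
    have ht' : 2 * var (μ.map (γ · (midpoint ℝ s t))) - var (μ.map (γ · s)) ≤
        var (μ.map (γ · t)) :=
      le_var_map (hmeas t ht) fun y₂ => by linarith [hs' y₂]
    linarith
  intro y₁ y₂
  obtain ⟨m, hm⟩ := hM.exists_isMetricMidpoint y₁ y₂
  have hs₁ := (hint s hs y₁).div_const 2
  have ht₂ := (hint t ht y₂).div_const 2
  calc var (μ.map (γ · (midpoint ℝ s t)))
      ≤ ∫ ω, dist (γ ω (midpoint ℝ s t)) m ^ 2 ∂μ := var_map_le (hmeas _ hmid) m
    _ ≤ ∫ ω, (dist (γ ω s) y₁ ^ 2 / 2 + dist (γ ω t) y₂ ^ 2 / 2) ∂μ :=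
        integral_mono_ae (hint _ hmid m) (hs₁.add ht₂)
          (hgeo.mono fun ω hω => hM.sq_dist_geodesic_midpoint_le hω hs ht hm)
    _ = _ := by rw [integral_add hs₁ ht₂, integral_div, integral_div]

theorem exists_var_map_le_var_map_add_mul [Nonempty M] (hgeo : ∀ᵐ ω ∂μ, IsGeodesic (γ ω))
    (hmeas : ∀ t ∈ Icc (0:ℝ) 1, Measurable (γ · t))
    (hint : ∀ t ∈ Icc (0:ℝ) 1, ∀ y, Integrable (fun ω => dist (γ ω t) y ^ 2) μ) :
    ∃ C, ∀ t ∈ Icc (0:ℝ) 1, ∀ s ∈ Icc (0:ℝ) 1,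
      var (μ.map (γ · t)) ≤ var (μ.map (γ · s)) + C * |t - s| := by
  obtain ⟨w⟩ := ‹Nonempty M›
  have h₀ := hint 0 (left_mem_Icc.2 zero_le_one) w
  have h₁ := hint 1 (right_mem_Icc.2 zero_le_one) w
  set B := ∫ ω, (6 * dist (γ ω 0) w ^ 2 + 3 * dist (γ ω 1) w ^ 2) ∂μ
  set K := ∫ ω, (2 * dist (γ ω 0) w ^ 2 + 2 * dist (γ ω 1) w ^ 2) ∂μ
  have hK : 0 ≤ K := integral_nonneg fun _ => by positivity
  have hB : ∀ s ∈ Icc (0:ℝ) 1, var (μ.map (γ · s)) ≤ B := fun s hs =>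
    (var_map_le (hmeas s hs) w).trans <| integral_mono_ae (hint s hs w)
      ((h₀.const_mul 6).add (h₁.const_mul 3)) (hgeo.mono fun ω hω => hω.sq_dist_le hs w)
  refine ⟨B + 2 * K, fun t ht s hs => ?_⟩
  set δ := |t - s|
  have hδ : 0 ≤ δ := abs_nonneg _
  have hshift : ∀ y, ∫ ω, dist (γ ω t) y ^ 2 ∂μ ≤
      (1 + δ) * ∫ ω, dist (γ ω s) y ^ 2 ∂μ + 2 * δ * K := by
    intro y
    have hs' := (hint s hs y).const_mul (1 + δ)
    have hK' : Integrable (fun ω => 2 * δ * (2 * dist (γ ω 0) w ^ 2 + 2 * dist (γ ω 1) w ^ 2)) μ :=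
      ((h₀.const_mul 2).add (h₁.const_mul 2)).const_mul (2 * δ)
    calc ∫ ω, dist (γ ω t) y ^ 2 ∂μ
        ≤ ∫ ω, ((1 + δ) * dist (γ ω s) y ^ 2 +
            2 * δ * (2 * dist (γ ω 0) w ^ 2 + 2 * dist (γ ω 1) w ^ 2)) ∂μ :=
          integral_mono_ae (hint t ht y) (hs'.add hK') (hgeo.mono fun ω hω => by
            nlinarith [hω.sq_dist_le_add ht hs y, dist_sq_le_two_mul_add (γ ω 0) (γ ω 1) w])
      _ = _ := by rw [integral_add hs' hK', integral_const_mul, integral_const_mul]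
  have hvar : var (μ.map (γ · t)) - 2 * δ * K ≤ (1 + δ) * var (μ.map (γ · s)) := by
    rw [← div_le_iff₀' (by positivity : (0:ℝ) < 1 + δ)]
    refine le_var_map (hmeas s hs) fun y => ?_
    rw [div_le_iff₀' (by positivity : (0:ℝ) < 1 + δ)]
    linarith [var_map_le (μ := μ) (hmeas t ht) y, hshift y]
  nlinarith [hB s hs]

theorem continuousOn_var_map [Nonempty M] (hgeo : ∀ᵐ ω ∂μ, IsGeodesic (γ ω))
    (hmeas : ∀ t ∈ Icc (0:ℝ) 1, Measurable (γ · t))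
    (hint : ∀ t ∈ Icc (0:ℝ) 1, ∀ y, Integrable (fun ω => dist (γ ω t) y ^ 2) μ) :
    ContinuousOn (fun t => var (μ.map (γ · t))) (Icc 0 1) := by
  obtain ⟨C, hC⟩ := exists_var_map_le_var_map_add_mul hgeo hmeas hint
  refine (LipschitzOnWith.of_le_add_mul' C fun t ht s hs => ?_).continuousOn
  rw [Real.dist_eq]
  exact hC t ht s hs

theorem convexOn_var_map_geodesic [IsFiniteMeasure μ] (hM : IsNPC M)
    (hgeo : ∀ᵐ ω ∂μ, IsGeodesic (γ ω)) (hmeas : ∀ t ∈ Icc (0:ℝ) 1, Measurable (γ · t))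
    {y₀ : M} (h₀ : Integrable (fun ω => dist (γ ω 0) y₀ ^ 2) μ)
    (h₁ : Integrable (fun ω => dist (γ ω 1) y₀ ^ 2) μ) :
    ConvexOn ℝ (Icc 0 1) (fun t => var (μ.map (γ · t))) := by
  have : Nonempty M := ⟨y₀⟩
  have hint := fun t ht y => integrable_sq_dist_geodesic hgeo hmeas h₀ h₁ (t := t) ht y
  exact (continuousOn_var_map hgeo hmeas hint).convexOn_of_midpoint_le (convex_Icc 0 1)
    fun s hs t ht => var_map_midpoint_le hM hgeo hmeas hint hs ht

end Variance

theorem variance_convex_along_quasiGeodesic_general {M : Type*} [MetricSpace M]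
    [MeasurableSpace M] [BorelSpace M] (hM : IsNPC M)
    (μ : Measure M) [IsProbabilityMeasure μ]
    (γ : M → ℝ → M)
    (hgeo : ∀ᵐ x ∂μ, IsGeodesic (γ x) ∧ γ x 0 = x)
    (hmeas : ∀ t ∈ Set.Icc (0:ℝ) 1, Measurable (fun x => γ x t))
    (y₀ : M)
    (hmom0 : Integrable (fun x => dist x y₀ ^ 2) μ)
    (hmom1 : Integrable (fun x => dist (γ x 1) y₀ ^ 2) μ) :
    ConvexOn ℝ (Set.Icc (0:ℝ) 1) (fun t => var (μ.map (fun x => γ x t))) := by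
  have h₀ : Integrable (fun x => dist (γ x 0) y₀ ^ 2) μ :=
    hmom0.congr (hgeo.mono fun x hx => by simp only [hx.2])
  exact convexOn_var_map_geodesic hM (hgeo.mono fun x hx => hx.1) hmeas h₀ hmom1

/-- Convexity of the variance along `W₂` quasi-geodesics in a complete NPC (CAT(0)) space:
if `μ_t = (x ↦ γ_x(t))_# μ` for a measurable family of geodesics `γ_x`, then
`t ↦ Var(μ_t)` is convex on `[0,1]`. -/
theorem variance_convex_along_quasiGeodesic {M : Type*} [MetricSpace M] [CompleteSpace M]
    [Nonempty M] [MeasurableSpace M] [BorelSpace M] (hM : IsNPC M)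
    (μ : Measure M) [IsProbabilityMeasure μ]
    (γ : M → ℝ → M)
    (hgeo : ∀ᵐ x ∂μ, IsGeodesic (γ x) ∧ γ x 0 = x)
    (hmeas : ∀ t ∈ Set.Icc (0:ℝ) 1, Measurable (fun x => γ x t))
    (y₀ : M)
    (hmom0 : Integrable (fun x => dist x y₀ ^ 2) μ)
    (hmom1 : Integrable (fun x => dist (γ x 1) y₀ ^ 2) μ) :
    ConvexOn ℝ (Set.Icc (0:ℝ) 1) (fun t => var (μ.map (fun x => γ x t))) :=
  variance_convex_along_quasiGeodesic_general hM μ γ hgeo hmeas y₀ hmom0 hmom1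
end
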